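/- Let p be prime and suppose A ⊆ (Z/p²Z)² is a tiling complement of the non-cyclic Lagrangian H = {(x,y) : px = py = 0}. Then: (a) for any B with (A,B) a tiling pair of (Z/p²Z)², the set A is a symplectic spectrum of B (i.e. |A| = |B| and ΔA ⊆ Z(1̂_B^{sym})); and (b) for any S with (A,S) a symplectic spectral pair with ΔS ⊆ Z(1̂_A^{sym}) or ΔA ⊆ Z(1̂_S^{sym}), the pair (A,S) is a tiling pair. -/

import Mathlib

open Complex

abbrev G (n : ℕ) := ZMod n × ZMod n

def symp {n : ℕ} (x y : G n) : ZMod n := x.1 * y.2 - x.2 * y.1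

noncomputable def sF {n : ℕ} (A : Finset (G n)) (ξ : G n) : ℂ :=
  ∑ a ∈ A, Complex.exp (2 * Real.pi * Complex.I * ((symp a ξ).val : ℂ) / (n : ℂ))

/-- The non-cyclic Lagrangian of `(Z/p²Z)²`. -/
def Hp (p : ℕ) : AddSubgroup (G (p ^ 2)) where
  carrier := {g | p • g = 0}
  zero_mem' := by simp
  add_mem' := by
    intro a b ha hb
    simp only [Set.mem_setOf_eq, smul_add] at *
    rw [ha, hb, add_zero]
  neg_mem' := by
    intro a ha
    simp only [Set.mem_setOf_eq, smul_neg] at *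
    rw [ha, neg_zero]

def IsTilingPairSub {n : ℕ} (A : Finset (G n)) (H : AddSubgroup (G n)) : Prop :=
  ∀ g : G n, ∃! q : G n × G n, (q.1 ∈ A ∧ q.2 ∈ H) ∧ q.1 + q.2 = g

def IsTilingPair {n : ℕ} (A B : Finset (G n)) : Prop :=
  ∀ g : G n, ∃! q : G n × G n, (q.1 ∈ A ∧ q.2 ∈ B) ∧ q.1 + q.2 = g

/-!
A complement `A` of `H = {g | p • g = 0}` maps bijectively onto `(ℤ/p)²` under reduction mod `p`,
so `|A| = p²`. Let `d = a₁ - a₂` with `a₁ ≠ a₂` in `A`. Then `d ∉ H`, so the values `⟨a, d⟩_s`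
(`a ∈ A`) meet every residue class mod `p`, while `⟨a₁, d⟩_s = ⟨a₂, d⟩_s`. If
`1̂_A(d) = ∑_{a ∈ A} ζ^⟨a, d⟩_s` vanished, `Φ_{p²}(X) = ∑_{i < p} X^{p i}` would divide
`∑_{a ∈ A} X^⟨a, d⟩_s`, whose coefficients would then be `p`-periodic: every value in `ℤ/p²` would
be attained, by only `p² = |A|` elements, hence each exactly once. So `1̂_A` has no zero on `ΔA`.

(a) For a tiling pair, `1̂_A 1̂_B = 1̂_G` vanishes off `0`, so `1̂_B` vanishes on `ΔA`.
(b) The square matrix `(e(⟨s, a⟩_s))_{a ∈ A, s ∈ S}` has orthogonal rows iff it has orthogonal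
columns, so either hypothesis makes `1̂_A` vanish on `ΔS`. Hence `ΔA ∩ ΔS = ∅`, the sums `a + s`
are distinct, and `|A| |S| = |G|` gives `A ⊕ S = G`.
-/

open Finset Polynomial ComplexConjugate

section Tiling

variable {n : ℕ} {A B : Finset (G n)}

theorem IsTilingPair.injOn_add (h : IsTilingPair A B) :
    Set.InjOn (fun q : G n × G n => q.1 + q.2) ↑(A ×ˢ B) := by
  intro q hq q' hq' hqq'
  rw [coe_product, Set.mem_prod] at hq hq'
  exact (h _).unique ⟨hq, rfl⟩ ⟨hq', hqq'.symm⟩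

theorem IsTilingPair.sum_add [NeZero n] {M : Type*} [AddCommMonoid M] (h : IsTilingPair A B)
    (f : G n → M) : ∑ q ∈ A ×ˢ B, f (q.1 + q.2) = ∑ g, f g := by
  refine sum_nbij (fun q => q.1 + q.2) (fun _ _ => mem_univ _) h.injOn_add ?_ fun _ _ => rfl
  intro g _
  obtain ⟨q, ⟨hq, hqg⟩, -⟩ := h g
  exact ⟨q, by simpa using hq, hqg⟩

theorem IsTilingPair.card_mul_card [NeZero n] (h : IsTilingPair A B) : #A * #B = n ^ 2 := by
  have hsum := h.sum_add fun _ => (1 : ℕ)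
  simp only [sum_const, smul_eq_mul, mul_one, card_product, card_univ, Fintype.card_prod,
    ZMod.card] at hsum
  rw [hsum, sq]

theorem isTilingPair_of_injOn_add [NeZero n]
    (hinj : Set.InjOn (fun q : G n × G n => q.1 + q.2) ↑(A ×ˢ B)) (hcard : #A * #B = n ^ 2) :
    IsTilingPair A B := by
  have hsurj := surjOn_of_injOn_of_card_le _ (fun q _ => mem_coe.2 (mem_univ (q.1 + q.2))) hinj
    (by simp [card_product, hcard, sq])
  intro g
  obtain ⟨q, hq, hqg⟩ := hsurj (mem_univ g)
  refine ⟨q, ⟨by simpa using hq, hqg⟩, fun q' ⟨hq', hq'g⟩ => hinj ?_ hq (hq'g.trans hqg.symm)⟩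
  simpa using hq'

theorem IsTilingPairSub.eq_of_sub_mem {A : Finset (G n)} {H : AddSubgroup (G n)}
    (hA : IsTilingPairSub A H) {a a' : G n} (ha : a ∈ A) (ha' : a' ∈ A) (h : a - a' ∈ H) :
    a = a' :=
  congrArg Prod.fst <| (hA a).unique (y₁ := (a, 0)) (y₂ := (a', a - a'))
    ⟨⟨ha, H.zero_mem⟩, add_zero a⟩ ⟨⟨ha', h⟩, add_sub_cancel a' a⟩

theorem IsTilingPairSub.exists_sub_mem {A : Finset (G n)} {H : AddSubgroup (G n)}
    (hA : IsTilingPairSub A H) (g : G n) : ∃ a ∈ A, g - a ∈ H := by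
  obtain ⟨q, ⟨⟨ha, hh⟩, hq⟩, -⟩ := hA g
  exact ⟨q.1, ha, by rwa [← hq, add_sub_cancel_left]⟩

end Tiling

theorem injOn_add_of_sub_eq_sub {α : Type*} [AddCommGroup α] {A B : Finset α}
    (h : ∀ a ∈ A, ∀ a' ∈ A, ∀ b ∈ B, ∀ b' ∈ B, a - a' = b' - b → a = a') :
    Set.InjOn (fun q : α × α => q.1 + q.2) ↑(A ×ˢ B) := by
  rintro ⟨a, b⟩ hab ⟨a', b'⟩ hab' hsum
  simp only [coe_product, Set.mem_prod, mem_coe] at hab hab' hsum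
  obtain rfl : a = a' := h a hab.1 a' hab'.1 b hab.2 b' hab'.2
    (sub_eq_sub_iff_add_eq_add.2 (hsum.trans (add_comm _ _)))
  simpa using hsum

theorem Matrix.mul_eq_smul_one_comm_of_equiv {m l K : Type*} [Fintype m] [Fintype l]
    [DecidableEq m] [DecidableEq l] [Field K] (e : m ≃ l) {M : Matrix m l K} {N : Matrix l m K}
    {c : K} (hc : c ≠ 0) (h : M * N = c • 1) : N * M = c • 1 := by
  have hinv : M * (c⁻¹ • N) = 1 := by
    rw [Matrix.mul_smul, h, smul_smul, inv_mul_cancel₀ hc, one_smul]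
  calc N * M = c • (c⁻¹ • N * M) := by
        rw [Matrix.smul_mul, smul_smul, mul_inv_cancel₀ hc, one_smul]
    _ = c • 1 := by rw [(Matrix.mul_eq_one_comm_of_equiv e).1 hinv]

section Symplectic

variable {n : ℕ}

theorem symp_add_left (x y z : G n) : symp (x + y) z = symp x z + symp y z := by
  simp only [symp, Prod.fst_add, Prod.snd_add]; ring

theorem symp_zero_right (x : G n) : symp x 0 = 0 := by
  simp [symp]

variable [NeZero n]

noncomputable def sympChar (ξ : G n) : AddChar (G n) ℂ :=
  ZMod.stdAddChar.compAddMonoidHom (AddMonoidHom.mk' (symp · ξ) fun x y => symp_add_left x y ξ)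

@[simp]
theorem sympChar_apply (ξ x : G n) : sympChar ξ x = ZMod.stdAddChar (symp x ξ) := rfl

theorem sF_eq_sum_sympChar (A : Finset (G n)) (ξ : G n) : sF A ξ = ∑ a ∈ A, sympChar ξ a := by
  simp [sF, ZMod.stdAddChar_apply, ZMod.toCircle_apply]

theorem sF_zero (A : Finset (G n)) : sF A 0 = #A := by
  simp [sF_eq_sum_sympChar, symp_zero_right]

theorem sympChar_mul_conj (ξ η x : G n) :
    sympChar ξ x * conj (sympChar η x) = sympChar (ξ - η) x := by
  rw [sympChar_apply, sympChar_apply, ← AddChar.map_neg_eq_conj, ← AddChar.map_add_eq_mul,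
    sympChar_apply]
  congr 1
  simp only [symp, Prod.fst_sub, Prod.snd_sub]; ring

theorem conj_sympChar_mul (ξ x y : G n) :
    conj (sympChar ξ x) * sympChar ξ y = sympChar (x - y) ξ := by
  rw [sympChar_apply, sympChar_apply, ← AddChar.map_neg_eq_conj, ← AddChar.map_add_eq_mul,
    sympChar_apply]
  congr 1
  simp only [symp, Prod.fst_sub, Prod.snd_sub]; ring

theorem sympChar_ne_zero {ξ : G n} (hξ : ξ ≠ 0) : sympChar ξ ≠ 0 := by
  rw [AddChar.ne_zero_iff]
  have hsymp : ∃ x : G n, symp x ξ ≠ 0 := by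
    by_cases h1 : ξ.1 = 0
    · exact ⟨(1, 0), by simpa [symp] using fun h2 => hξ (Prod.ext h1 h2)⟩
    · exact ⟨(0, -1), by simpa [symp] using h1⟩
  obtain ⟨x, hx⟩ := hsymp
  refine ⟨x, fun h1 => hx ?_⟩
  rw [sympChar_apply, ← AddChar.map_zero_eq_one (ZMod.stdAddChar (N := n))] at h1
  exact ZMod.injective_stdAddChar h1

theorem IsTilingPair.sF_mul_sF_eq_zero {A B : Finset (G n)} (h : IsTilingPair A B) {ξ : G n}
    (hξ : ξ ≠ 0) : sF A ξ * sF B ξ = 0 := by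
  rw [sF_eq_sum_sympChar, sF_eq_sum_sympChar, sum_mul_sum, ← sum_product',
    ← AddChar.sum_eq_zero_iff_ne_zero.2 (sympChar_ne_zero hξ), ← h.sum_add]
  simp only [AddChar.map_add_eq_mul]

theorem sF_sub_eq_zero_of_card_eq {A S : Finset (G n)} (hcard : #A = #S)
    (h : ∀ a ∈ A, ∀ a' ∈ A, a ≠ a' → sF S (a - a') = 0) :
    ∀ s ∈ S, ∀ s' ∈ S, s ≠ s' → sF A (s - s') = 0 := by
  classical
  obtain rfl | hA := A.eq_empty_or_nonempty
  · simp [eq_comm (a := 0)] at hcard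
    simp [hcard]
  let M : Matrix A S ℂ := Matrix.of fun a s => sympChar (a : G n) s
  have hrows : M * M.conjTranspose = (#A : ℂ) • 1 := by
    ext a a'
    have hentry : (M * M.conjTranspose) a a' = sF S (a - a') := by
      simp only [Matrix.mul_apply, Matrix.conjTranspose_apply, M, Matrix.of_apply,
        RCLike.star_def, sympChar_mul_conj, sF_eq_sum_sympChar]
      exact sum_coe_sort S _
    rw [hentry]
    obtain rfl | haa := eq_or_ne a a'
    · simp [sF_zero, hcard]
    · simp [Matrix.one_apply_ne haa, h a a.2 a' a'.2 (Subtype.coe_ne_coe.2 haa)]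
  have hcols := Matrix.mul_eq_smul_one_comm_of_equiv
    (Fintype.equivOfCardEq (by simpa using hcard)) (by simpa using hA.ne_empty) hrows
  intro s hs s' hs' hss'
  have hentry : (M.conjTranspose * M) ⟨s, hs⟩ ⟨s', hs'⟩ = sF A (s - s') := by
    simp only [Matrix.mul_apply, Matrix.conjTranspose_apply, M, Matrix.of_apply,
      RCLike.star_def, conj_sympChar_mul, sF_eq_sum_sympChar]
    exact sum_coe_sort A _
  rw [← hentry, hcols, Matrix.smul_apply, Matrix.one_apply_ne (by simpa using hss'), smul_zero]

end Symplectic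

theorem coeff_eq_coeff_mod_of_cyclotomic_dvd {R : Type*} [CommRing R] [Nontrivial R] {p : ℕ}
    (hp : p.Prime) {P : R[X]} (hdvd : cyclotomic (p ^ 2) R ∣ P) (hP : P.natDegree < p ^ 2)
    {n : ℕ} (hn : n < p ^ 2) : P.coeff n = P.coeff (n % p) := by
  obtain ⟨Q, rfl⟩ := hdvd
  have hQ : Q.natDegree < p := by
    rcases eq_or_ne Q 0 with rfl | hQ0
    · simpa using hp.pos
    rw [(cyclotomic.monic _ R).natDegree_mul' hQ0, natDegree_cyclotomic,
      Nat.totient_prime_pow hp two_pos] at hP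
    have : p ^ (2 - 1) * (p - 1) + p = p ^ 2 := by
      rw [Nat.add_one_sub_one, pow_one, Nat.mul_sub_one, sq,
        Nat.sub_add_cancel (Nat.le_mul_self p)]
    omega
  have hcoeff : ∀ m < p ^ 2, (cyclotomic (p ^ 2) R * Q).coeff m = Q.coeff (m % p) := by
    intro m hm
    rw [cyclotomic_prime_pow_eq_geom_sum (n := 1) hp, sum_mul, finsetSum_coeff,
      sum_eq_single (m / p)]
    · rw [pow_one, ← pow_mul, coeff_X_pow_mul', if_pos (Nat.mul_div_le m p),
        ← Nat.mod_eq_sub_mul_div]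
    · intro i _ hi
      rw [pow_one, ← pow_mul, coeff_X_pow_mul']
      split_ifs with hle
      · have hlt : i < m / p :=
          lt_of_le_of_ne ((Nat.le_div_iff_mul_le hp.pos).2 (by linarith)) hi
        have : p * i + p ≤ m := by nlinarith [Nat.mul_div_le m p]
        exact coeff_eq_zero_of_natDegree_lt (by omega)
      · rfl
    · intro h
      exact absurd (mem_range.2 ((Nat.div_lt_iff_lt_mul hp.pos).2 (by rwa [← sq]))) h
  have hmod : n % p < p ^ 2 := (Nat.mod_lt n hp.pos).trans_le (Nat.le_self_pow two_ne_zero p)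
  rw [hcoeff n hn, hcoeff (n % p) hmod, Nat.mod_mod]

def castSq (p : ℕ) : ZMod (p ^ 2) →+* ZMod p := ZMod.castHom (dvd_pow_self p two_ne_zero) (ZMod p)

def reduceMod (p : ℕ) : G (p ^ 2) →+* G p := (castSq p).prodMap (castSq p)

theorem reduceMod_surjective (p : ℕ) : Function.Surjective (reduceMod p) := by
  rw [reduceMod, RingHom.coe_prodMap]
  exact (ZMod.ringHom_surjective _).prodMap (ZMod.ringHom_surjective _)

theorem castSq_symp {p : ℕ} (x y : G (p ^ 2)) :
    castSq p (symp x y) = symp (reduceMod p x) (reduceMod p y) := by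
  simp [symp, reduceMod]

section RootsOfUnity

variable {p : ℕ} [Fact p.Prime]

theorem val_castSq (k : ZMod (p ^ 2)) : (castSq p k).val = k.val % p := by
  rw [castSq, ZMod.castHom_apply, ZMod.cast_eq_val, ZMod.val_natCast]

theorem card_filter_eq_of_sum_stdAddChar_eq_zero {ι : Type*} {s : Finset ι}
    {f : ι → ZMod (p ^ 2)} (h : ∑ i ∈ s, ZMod.stdAddChar (f i) = 0) {k k' : ZMod (p ^ 2)}
    (hkk' : castSq p k = castSq p k') :
    #{i ∈ s | f i = k} = #{i ∈ s | f i = k'} := by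
  classical
  have hp := Fact.out (p := p.Prime)
  set ζ : ℂ := ZMod.stdAddChar (1 : ZMod (p ^ 2))
  have hζ : IsPrimitiveRoot ζ (p ^ 2) := by
    convert Complex.isPrimitiveRoot_exp (p ^ 2) (NeZero.ne _) using 1
    simpa only [Int.cast_one, mul_one] using ZMod.stdAddChar_coe (N := p ^ 2) 1
  have hψ (x : ZMod (p ^ 2)) : ZMod.stdAddChar x = ζ ^ x.val := by
    rw [← AddChar.map_nsmul_eq_pow, nsmul_one, ZMod.natCast_zmod_val]
  let P : ℚ[X] := ∑ i ∈ s, X ^ (f i).val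
  have hcoeff (x : ZMod (p ^ 2)) : P.coeff x.val = #{i ∈ s | f i = x} := by
    simp [P, finsetSum_coeff, coeff_X_pow, (ZMod.val_injective _).eq_iff, eq_comm]
  have hdvd : cyclotomic (p ^ 2) ℚ ∣ P := by
    rw [cyclotomic_eq_minpoly_rat hζ (NeZero.pos _)]
    exact minpoly.dvd ℚ ζ (by simpa [P, hψ] using h)
  have hdeg : P.natDegree < p ^ 2 :=
    (natDegree_sum_le_of_forall_le _ _ (n := p ^ 2 - 1) fun i _ => by
      simpa using Nat.le_sub_one_of_lt (ZMod.val_lt (f i))).trans_lt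
      (Nat.sub_one_lt (NeZero.ne _))
  have hperiodic (x : ZMod (p ^ 2)) : P.coeff x.val = P.coeff (x.val % p) :=
    coeff_eq_coeff_mod_of_cyclotomic_dvd hp hdvd hdeg (ZMod.val_lt x)
  have hkk'_coeff : P.coeff k.val = P.coeff k'.val := by
    rw [hperiodic k, hperiodic k', ← val_castSq, ← val_castSq, hkk']
  exact_mod_cast (hcoeff k).symm.trans (hkk'_coeff.trans (hcoeff k'))

theorem injOn_of_sum_stdAddChar_eq_zero {ι : Type*} {s : Finset ι} {f : ι → ZMod (p ^ 2)}
    (hs : #s = p ^ 2) (hf : ∀ k, ∃ i ∈ s, castSq p (f i) = castSq p k)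
    (h : ∑ i ∈ s, ZMod.stdAddChar (f i) = 0) : Set.InjOn f s := by
  classical
  have himage : s.image f = univ := by
    refine eq_univ_of_forall fun k => ?_
    obtain ⟨i, hi, hik⟩ := hf k
    have hfiber : #{j ∈ s | f j = k} ≠ 0 := by
      rw [← card_filter_eq_of_sum_stdAddChar_eq_zero h hik]
      exact card_ne_zero_of_mem (mem_filter.2 ⟨hi, rfl⟩)
    obtain ⟨j, hj⟩ := card_ne_zero.1 hfiber
    rw [mem_filter] at hj
    exact mem_image.2 ⟨j, hj.1, hj.2⟩
  rw [← card_image_iff, himage, card_univ, ZMod.card, hs]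

end RootsOfUnity

section Complement
variable {p : ℕ} [Fact p.Prime]

theorem natCast_mul_eq_zero_iff_castSq_eq_zero (x : ZMod (p ^ 2)) :
    (p : ZMod (p ^ 2)) * x = 0 ↔ castSq p x = 0 := by
  have hdvd (m : ℕ) : p ^ 2 ∣ p * m ↔ p ∣ m := by
    rw [sq, Nat.mul_dvd_mul_iff_left (Fact.out : p.Prime).pos]
  rw [← ZMod.natCast_zmod_val x, ← Nat.cast_mul, map_natCast, ZMod.natCast_eq_zero_iff,
    ZMod.natCast_eq_zero_iff, hdvd]

theorem mem_Hp_iff {g : G (p ^ 2)} : g ∈ Hp p ↔ reduceMod p g = 0 := by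
  change p • g = 0 ↔ _
  simp [Prod.ext_iff, reduceMod, natCast_mul_eq_zero_iff_castSq_eq_zero]

theorem symp_surjective {e : G p} (he : e ≠ 0) : Function.Surjective (symp · e) := by
  intro t
  by_cases h2 : e.2 = 0
  · have h1 : e.1 ≠ 0 := fun h1 => he (Prod.ext h1 h2)
    exact ⟨(0, -t / e.1), by simp [symp, h1]⟩
  · exact ⟨(t / e.2, 0), by simp [symp, h2]⟩

variable {A : Finset (G (p ^ 2))}

theorem IsTilingPairSub.injOn_reduceMod (hA : IsTilingPairSub A (Hp p)) :
    Set.InjOn (reduceMod p) A := fun a ha a' ha' h =>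
  hA.eq_of_sub_mem ha ha' (mem_Hp_iff.2 (by rw [map_sub, h, sub_self]))

theorem IsTilingPairSub.exists_reduceMod_eq (hA : IsTilingPairSub A (Hp p)) (x : G p) :
    ∃ a ∈ A, reduceMod p a = x := by
  obtain ⟨g, rfl⟩ := reduceMod_surjective p x
  obtain ⟨a, ha, hga⟩ := hA.exists_sub_mem g
  refine ⟨a, ha, sub_eq_zero.1 ?_⟩
  rw [← map_sub, ← mem_Hp_iff, ← neg_sub]
  exact neg_mem hga

theorem IsTilingPairSub.card_eq (hA : IsTilingPairSub A (Hp p)) : #A = p ^ 2 := by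
  rw [card_nbij (t := univ) (reduceMod p) (fun _ _ => mem_univ _) hA.injOn_reduceMod
    fun x _ => hA.exists_reduceMod_eq x, card_univ, Fintype.card_prod, ZMod.card, sq]

theorem IsTilingPairSub.exists_castSq_symp_eq (hA : IsTilingPairSub A (Hp p)) {d : G (p ^ 2)}
    (hd : d ∉ Hp p) (k : ZMod (p ^ 2)) : ∃ a ∈ A, castSq p (symp a d) = castSq p k := by
  obtain ⟨x, hx⟩ := symp_surjective (mt mem_Hp_iff.2 hd) (castSq p k)
  obtain ⟨a, ha, rfl⟩ := hA.exists_reduceMod_eq x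
  exact ⟨a, ha, (castSq_symp a d).trans hx⟩

theorem IsTilingPairSub.sF_sub_ne_zero (hA : IsTilingPairSub A (Hp p)) {a₁ a₂ : G (p ^ 2)}
    (h₁ : a₁ ∈ A) (h₂ : a₂ ∈ A) (hne : a₁ ≠ a₂) : sF A (a₁ - a₂) ≠ 0 := by
  intro h0
  have hd : a₁ - a₂ ∉ Hp p := fun h => hne (hA.eq_of_sub_mem h₁ h₂ h)
  have hinj := injOn_of_sum_stdAddChar_eq_zero hA.card_eq (hA.exists_castSq_symp_eq hd)
    (by simpa [sF_eq_sum_sympChar] using h0)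
  have hsymp : symp a₁ (a₁ - a₂) = symp a₂ (a₁ - a₂) := by
    simp only [symp, Prod.fst_sub, Prod.snd_sub]; ring
  exact hne (hinj h₁ h₂ hsymp)

end Complement

/-- If `A` complements the non-cyclic Lagrangian of `(Z/p²Z)²`, then `A` is a symplectic
spectrum for each of its tiling complements, and a tiling complement for each of its
symplectic spectra. -/
theorem stmt18 (p : ℕ) (hp : p.Prime) (A : Finset (G (p ^ 2)))
    (hA : IsTilingPairSub A (Hp p)) :
    (∀ B : Finset (G (p ^ 2)), IsTilingPair A B →
      A.card = B.card ∧ ∀ a ∈ A, ∀ a' ∈ A, a ≠ a' → sF B (a - a') = 0) ∧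
    (∀ S : Finset (G (p ^ 2)), A.card = S.card →
      ((∀ s ∈ S, ∀ s' ∈ S, s ≠ s' → sF A (s - s') = 0) ∨
       (∀ a ∈ A, ∀ a' ∈ A, a ≠ a' → sF S (a - a') = 0)) →
      IsTilingPair A S) := by
  have := Fact.mk hp
  have hcardA := hA.card_eq
  refine ⟨fun B hAB => ⟨?_, fun a ha a' ha' hne => ?_⟩, fun S hcard hspec => ?_⟩
  · have hmul := hAB.card_mul_card
    rw [hcardA] at hmul ⊢
    exact (Nat.eq_of_mul_eq_mul_left (pow_pos hp.pos 2) (hmul.trans (sq _))).symm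
  · exact (mul_eq_zero.1 (hAB.sF_mul_sF_eq_zero (sub_ne_zero.2 hne))).resolve_left
      (hA.sF_sub_ne_zero ha ha' hne)
  · have hS : ∀ s ∈ S, ∀ s' ∈ S, s ≠ s' → sF A (s - s') = 0 :=
      hspec.elim id (sF_sub_eq_zero_of_card_eq hcard)
    refine isTilingPair_of_injOn_add (injOn_add_of_sub_eq_sub
      fun a ha a' ha' s hs s' hs' hsub => ?_) (by rw [← hcard, hcardA]; ring)
    by_contra hne
    refine hA.sF_sub_ne_zero ha ha' hne (hsub ▸ hS s' hs' s hs fun hss => hne ?_)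
    rwa [hss, sub_self, sub_eq_zero] at hsub
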